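/- Let T > 0, let Ψ : ℝ² → ℝ² be continuously differentiable, and let X, Y : [0,T] → ℝ² be continuously differentiable curves with Y'(t) = Ψ(Y(t)) for all t ∈ [0,T] and X(0) = Y(0). Assume Ψ₁(X(0)) > 0, and that for every t ∈ (0,T] one has Ψ₁(X(t)) > 0 and Ψ₁(Y(t)) > 0, and that X₁'(t) = Ψ₁(X(t)) for all t. Then: (i) X₁ and Y₁ are injective (indeed strictly increasing) on [0,T]; (ii) if moreover X₂'(t) ≤ Ψ₂(X(t)) for all t ∈ [0,T], then for all s, t ∈ [0,T] with X₁(s) = Y₁(t) one has X₂(s) ≤ Y₂(t); (iii) if instead X₂'(t) ≥ Ψ₂(X(t)) for all t ∈ [0,T], then for all s, t ∈ [0,T] with X₁(s) = Y₁(t) one has X₂(s) ≥ Y₂(t). -/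

import Mathlib

/-!
Since `X₁' = Ψ₁ ∘ X` and `Y₁' = Ψ₁ ∘ Y` are positive, `X₁` and `Y₁` are strictly increasing, so
both trajectories are graphs `y = h x` and `y = g x` over intervals starting at `x₀ = X₁ 0 = Y₁ 0`.
By the inverse function rule, `g' = F (x, g)` and, in case (ii), `h' ≤ F (x, h)` for the slope
field `F = Ψ₂ / Ψ₁`, which is `C¹` where `Ψ₁ > 0` and hence `K`-Lipschitz on a compact
neighbourhood of the graph of `g`. So `h` can never cross the barrier `g + ε exp ((K + 1) (x - x₀))`
from below, and letting `ε → 0` gives `h ≤ g`. Case (iii) is case (ii) for the system reflected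
by `(x, y) ↦ (x, -y)`.
-/

open Set Filter Topology Function Metric NNReal

theorem IsCompact.continuousOn_invFunOn {α β : Type*} [TopologicalSpace α] [TopologicalSpace β]
    [T2Space β] [Nonempty α] {f : α → β} {s : Set α} (hs : IsCompact s) (hf : ContinuousOn f s)
    (hinj : InjOn f s) : ContinuousOn (invFunOn f s) (f '' s) := by
  refine continuousOn_iff_isClosed.2 fun C hC => ⟨f '' (C ∩ s), ?_, ?_⟩
  · exact ((hs.inter_left hC).image_of_continuousOn (hf.mono inter_subset_right)).isClosed
  · ext y
    constructor
    · rintro ⟨hy, x, hx, rfl⟩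
      rw [mem_preimage, hinj.leftInvOn_invFunOn hx] at hy
      exact ⟨⟨x, ⟨hy, hx⟩, rfl⟩, x, hx, rfl⟩
    · rintro ⟨⟨x, ⟨hxC, hx⟩, rfl⟩, -⟩
      exact ⟨by rwa [mem_preimage, hinj.leftInvOn_invFunOn hx], x, hx, rfl⟩

theorem HasDerivWithinAt.of_local_left_inverse {𝕜 : Type*} [NontriviallyNormedField 𝕜]
    {f g : 𝕜 → 𝕜} {f' a : 𝕜} {s t : Set 𝕜} (hg : Tendsto g (𝓝[s] a) (𝓝[t] (g a)))
    (hf : HasDerivWithinAt f f' t (g a)) (hf' : f' ≠ 0) (ha : a ∈ s)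
    (hfg : ∀ᶠ y in 𝓝[s] a, f (g y) = y) : HasDerivWithinAt g f'⁻¹ s a :=
  HasFDerivWithinAt.of_local_left_inverse
    (f' := ContinuousLinearEquiv.unitsEquivAut 𝕜 (Units.mk0 f' hf')) hg hf ha hfg

section ProdDeriv

variable {𝕜 E F : Type*} [NontriviallyNormedField 𝕜] [NormedAddCommGroup E] [NormedSpace 𝕜 E]
  [NormedAddCommGroup F] [NormedSpace 𝕜 F] {f : 𝕜 → E × F} {f' : E × F} {s : Set 𝕜} {x : 𝕜}

theorem HasDerivWithinAt.fst (h : HasDerivWithinAt f f' s x) :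
    HasDerivWithinAt (fun t => (f t).1) f'.1 s x :=
  (ContinuousLinearMap.fst 𝕜 E F).hasFDerivAt.comp_hasDerivWithinAt x h

theorem HasDerivWithinAt.snd (h : HasDerivWithinAt f f' s x) :
    HasDerivWithinAt (fun t => (f t).2) f'.2 s x :=
  (ContinuousLinearMap.snd 𝕜 E F).hasFDerivAt.comp_hasDerivWithinAt x h

end ProdDeriv

theorem IsCompact.exists_lipschitzOnWith_cthickening {E F : Type*} [NormedAddCommGroup E]
    [NormedSpace ℝ E] [ProperSpace E] [NormedAddCommGroup F] [NormedSpace ℝ F] {f : E → F}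
    {U K : Set E} (hK : IsCompact K) (hU : IsOpen U) (hKU : K ⊆ U) (hf : ContDiffOn ℝ 1 f U) :
    ∃ δ > 0, ∃ L, LipschitzOnWith L f (cthickening δ K) := by
  obtain ⟨δ, hδ, hδU⟩ := hK.exists_cthickening_subset_open hU hKU
  refine ⟨δ, hδ, LocallyLipschitzOn.exists_lipschitzOnWith_of_compact hK.cthickening ?_⟩
  intro x hx
  obtain ⟨L, t, ht, hLt⟩ :=
    ((hf x (hδU hx)).contDiffAt (hU.mem_nhds (hδU hx))).exists_lipschitzOnWith
  exact ⟨L, t, nhdsWithin_le_nhds ht, hLt⟩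

section Comparison

variable {v : ℝ → ℝ → ℝ} {h h' g g' : ℝ → ℝ} {a b δ : ℝ} {K : ℝ≥0}

theorem le_add_mul_exp_of_deriv_right_le
    (hv : ∀ x ∈ Ico a b, LipschitzOnWith K (v x) (Icc (g x) (g x + δ)))
    (hh : ContinuousOn h (Icc a b)) (hh' : ∀ x ∈ Ico a b, HasDerivWithinAt h (h' x) (Ici x) x)
    (hhv : ∀ x ∈ Ico a b, h' x ≤ v x (h x))
    (hg : ContinuousOn g (Icc a b)) (hg' : ∀ x ∈ Ico a b, HasDerivWithinAt g (g' x) (Ici x) x)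
    (hgv : ∀ x ∈ Ico a b, v x (g x) ≤ g' x) (ha : h a ≤ g a)
    {ε : ℝ} (hε : 0 < ε) (hεδ : ε * Real.exp ((K + 1) * (b - a)) ≤ δ) :
    ∀ x ∈ Icc a b, h x ≤ g x + ε * Real.exp ((K + 1) * (x - a)) := by
  have hexp : ∀ x, HasDerivAt (fun x => ε * Real.exp ((K + 1) * (x - a)))
      (ε * (Real.exp ((K + 1) * (x - a)) * (K + 1))) x := fun x => by
    simpa using (((hasDerivAt_id x).sub_const a).const_mul ((K : ℝ) + 1)).exp.const_mul ε
  refine image_le_of_deriv_right_lt_deriv_boundary' hh hh' ?_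
    (hg.add (continuous_const.mul (by fun_prop)).continuousOn)
    (fun x hx => (hg' x hx).add (hexp x).hasDerivWithinAt) ?_
  · simpa using ha.trans (le_add_of_nonneg_right hε.le)
  intro x hx hcontact
  set d := ε * Real.exp ((K + 1) * (x - a))
  have hd : 0 < d := by positivity
  have hdδ : d ≤ δ := hεδ.trans' <| by
    gcongr ε * Real.exp ?_
    exact mul_le_mul_of_nonneg_left (by linarith [hx.2]) (by positivity)
  have hlip : v x (g x + d) ≤ v x (g x) + K * d := by
    have := (hv x hx).dist_le_mul (g x + d) ⟨by linarith, by linarith⟩ (g x) ⟨le_rfl, by linarith⟩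
    rw [Real.dist_eq, Real.dist_eq, add_sub_cancel_left, abs_of_pos hd] at this
    linarith [le_abs_self (v x (g x + d) - v x (g x))]
  calc h' x ≤ v x (g x + d) := hcontact ▸ hhv x hx
    _ ≤ g' x + K * d := by linarith [hgv x hx]
    _ < g' x + d * (K + 1) := by linarith
    _ = g' x + ε * (Real.exp ((K + 1) * (x - a)) * (K + 1)) := by ring

theorem le_of_deriv_right_le_of_lipschitzOnWith (hδ : 0 < δ)
    (hv : ∀ x ∈ Ico a b, LipschitzOnWith K (v x) (Icc (g x) (g x + δ)))
    (hh : ContinuousOn h (Icc a b)) (hh' : ∀ x ∈ Ico a b, HasDerivWithinAt h (h' x) (Ici x) x)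
    (hhv : ∀ x ∈ Ico a b, h' x ≤ v x (h x))
    (hg : ContinuousOn g (Icc a b)) (hg' : ∀ x ∈ Ico a b, HasDerivWithinAt g (g' x) (Ici x) x)
    (hgv : ∀ x ∈ Ico a b, v x (g x) ≤ g' x) (ha : h a ≤ g a) :
    ∀ x ∈ Icc a b, h x ≤ g x := by
  intro x hx
  refine le_of_forall_pos_le_add fun η hη => ?_
  set E := Real.exp ((K + 1) * (b - a))
  have hE : 0 < E := Real.exp_pos _
  set ε := min (δ / E) (η / E)
  have hε : 0 < ε := lt_min (div_pos hδ hE) (div_pos hη hE)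
  have hxE : Real.exp ((K + 1) * (x - a)) ≤ E :=
    Real.exp_le_exp.2 (mul_le_mul_of_nonneg_left (by linarith [hx.2]) (by positivity))
  calc h x ≤ g x + ε * Real.exp ((K + 1) * (x - a)) :=
        le_add_mul_exp_of_deriv_right_le hv hh hh' hhv hg hg' hgv ha hε
          ((le_div_iff₀ hE).1 (min_le_left _ _)) x hx
    _ ≤ g x + ε * E := by gcongr
    _ ≤ g x + η := by gcongr; exact (le_div_iff₀ hE).1 (min_le_right _ _)

end Comparison

noncomputable def fstInv (Z : ℝ → ℝ × ℝ) (a b : ℝ) : ℝ → ℝ :=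
  invFunOn (fun t => (Z t).1) (Icc a b)

noncomputable def curveGraph (Z : ℝ → ℝ × ℝ) (a b x : ℝ) : ℝ :=
  (Z (fstInv Z a b x)).2

section CurveGraph

variable {Z Z' : ℝ → ℝ × ℝ} {a b : ℝ}
  (hZ : ∀ t ∈ Icc a b, HasDerivWithinAt Z (Z' t) (Icc a b) t) (hZ' : ∀ t ∈ Icc a b, 0 < (Z' t).1)

include hZ

theorem continuousOn_of_hasDerivWithinAt : ContinuousOn Z (Icc a b) :=
  fun t ht => (hZ t ht).continuousWithinAt

include hZ'

theorem strictMonoOn_fst_of_hasDerivWithinAt : StrictMonoOn (fun t => (Z t).1) (Icc a b) := by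
  refine strictMonoOn_of_hasDerivWithinAt_pos (convex_Icc a b) (f' := fun t => (Z' t).1)
    (continuous_fst.comp_continuousOn (continuousOn_of_hasDerivWithinAt hZ)) (fun t ht => ?_)
    (fun t ht => hZ' t (interior_subset ht))
  rw [interior_Icc] at ht ⊢
  exact ((hZ t (Ioo_subset_Icc_self ht)).fst).mono Ioo_subset_Icc_self

theorem image_fst_Icc (hab : a ≤ b) :
    (fun t => (Z t).1) '' Icc a b = Icc (Z a).1 (Z b).1 :=
  (continuous_fst.comp_continuousOn (continuousOn_of_hasDerivWithinAt hZ)).image_Icc_of_monotoneOn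
    hab (strictMonoOn_fst_of_hasDerivWithinAt hZ hZ').monotoneOn

theorem fstInv_fst {t : ℝ} (ht : t ∈ Icc a b) : fstInv Z a b (Z t).1 = t :=
  (strictMonoOn_fst_of_hasDerivWithinAt hZ hZ').injOn.leftInvOn_invFunOn ht

theorem curveGraph_fst {t : ℝ} (ht : t ∈ Icc a b) : curveGraph Z a b (Z t).1 = (Z t).2 := by
  rw [curveGraph, fstInv_fst hZ hZ' ht]

variable (hab : a ≤ b)
include hab

theorem mapsTo_fstInv : MapsTo (fstInv Z a b) (Icc (Z a).1 (Z b).1) (Icc a b) :=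
  (image_fst_Icc hZ hZ' hab ▸ surjOn_image _ _).mapsTo_invFunOn

theorem fst_fstInv {x : ℝ} (hx : x ∈ Icc (Z a).1 (Z b).1) : (Z (fstInv Z a b x)).1 = x :=
  (image_fst_Icc hZ hZ' hab ▸ surjOn_image _ _).rightInvOn_invFunOn hx

theorem continuousOn_fstInv : ContinuousOn (fstInv Z a b) (Icc (Z a).1 (Z b).1) :=
  image_fst_Icc hZ hZ' hab ▸ isCompact_Icc.continuousOn_invFunOn
    (continuous_fst.comp_continuousOn (continuousOn_of_hasDerivWithinAt hZ))
    (strictMonoOn_fst_of_hasDerivWithinAt hZ hZ').injOn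

theorem continuousOn_curveGraph : ContinuousOn (curveGraph Z a b) (Icc (Z a).1 (Z b).1) :=
  continuous_snd.comp_continuousOn <|
    (continuousOn_of_hasDerivWithinAt hZ).comp (continuousOn_fstInv hZ hZ' hab)
      (mapsTo_fstInv hZ hZ' hab)

theorem hasDerivWithinAt_fstInv {x : ℝ} (hx : x ∈ Icc (Z a).1 (Z b).1) :
    HasDerivWithinAt (fstInv Z a b) (Z' (fstInv Z a b x)).1⁻¹ (Icc (Z a).1 (Z b).1) x := by
  have ht := mapsTo_fstInv hZ hZ' hab hx
  refine HasDerivWithinAt.of_local_left_inverse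
    ((continuousOn_fstInv hZ hZ' hab x hx).tendsto_nhdsWithin (mapsTo_fstInv hZ hZ' hab))
    (hZ _ ht).fst (hZ' _ ht).ne' hx ?_
  filter_upwards [self_mem_nhdsWithin] with y hy using fst_fstInv hZ hZ' hab hy

theorem hasDerivWithinAt_curveGraph {x : ℝ} (hx : x ∈ Ico (Z a).1 (Z b).1) :
    HasDerivWithinAt (curveGraph Z a b)
      ((Z' (fstInv Z a b x)).2 / (Z' (fstInv Z a b x)).1) (Ici x) x := by
  have ht := mapsTo_fstInv hZ hZ' hab (Ico_subset_Icc_self hx)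
  have := (hZ _ ht).snd.scomp x (hasDerivWithinAt_fstInv hZ hZ' hab (Ico_subset_Icc_self hx))
    (mapsTo_fstInv hZ hZ' hab)
  rw [smul_eq_mul, inv_mul_eq_div] at this
  exact this.mono_of_mem_nhdsWithin (Icc_mem_nhdsGE_of_mem hx)

theorem apply_fstInv {x : ℝ} (hx : x ∈ Icc (Z a).1 (Z b).1) :
    Z (fstInv Z a b x) = (x, curveGraph Z a b x) :=
  Prod.ext (fst_fstInv hZ hZ' hab hx) rfl

end CurveGraph

noncomputable def slopeField (Ψ : ℝ × ℝ → ℝ × ℝ) (p : ℝ × ℝ) : ℝ := (Ψ p).2 / (Ψ p).1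

theorem exists_lipschitzOnWith_slopeField {Ψ : ℝ × ℝ → ℝ × ℝ} {Y Y' : ℝ → ℝ × ℝ} {a b : ℝ}
    (hΨ : ContDiff ℝ 1 Ψ) (hY : ∀ t ∈ Icc a b, HasDerivWithinAt Y (Y' t) (Icc a b) t)
    (hY' : ∀ t ∈ Icc a b, 0 < (Y' t).1) (hYode : ∀ t ∈ Icc a b, Y' t = Ψ (Y t)) (hab : a ≤ b) :
    ∃ δ > 0, ∃ K, ∀ x ∈ Icc (Y a).1 (Y b).1, LipschitzOnWith K (fun y => slopeField Ψ (x, y))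
      (Icc (curveGraph Y a b x) (curveGraph Y a b x + δ)) := by
  set graph := (fun x => (x, curveGraph Y a b x)) '' Icc (Y a).1 (Y b).1
  set U := {p : ℝ × ℝ | 0 < (Ψ p).1}
  have hU : IsOpen U := isOpen_lt continuous_const (continuous_fst.comp hΨ.continuous)
  have hgraphU : graph ⊆ U := by
    rintro _ ⟨x, hx, rfl⟩
    have ht := mapsTo_fstInv hY hY' hab hx
    simpa only [U, mem_ofPred_eq, ← apply_fstInv hY hY' hab hx, ← hYode _ ht] using hY' _ ht
  have hF : ContDiffOn ℝ 1 (slopeField Ψ) U :=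
    (contDiff_snd.comp hΨ).contDiffOn.div (contDiff_fst.comp hΨ).contDiffOn fun p hp => hp.ne'
  have hgraph : IsCompact graph := isCompact_Icc.image_of_continuousOn
    (continuousOn_id.prodMk (continuousOn_curveGraph hY hY' hab))
  obtain ⟨δ, hδ, K, hK⟩ := hgraph.exists_lipschitzOnWith_cthickening hU hgraphU hF
  refine ⟨δ, hδ, K, fun x hx => ?_⟩
  have hmaps : MapsTo (fun y => (x, y)) (Icc (curveGraph Y a b x) (curveGraph Y a b x + δ))
      (cthickening δ graph) := fun y hy =>
    mem_cthickening_of_dist_le _ _ _ _ (mem_image_of_mem _ hx) <| by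
      rw [Prod.dist_eq, dist_self, Real.dist_eq, abs_of_nonneg (by linarith [hy.1])]
      exact max_le hδ.le (by linarith [hy.2])
  simpa only [mul_one, comp_def] using hK.comp (LipschitzWith.prodMk_left x).lipschitzOnWith hmaps

section GraphComparison

variable {Ψ : ℝ × ℝ → ℝ × ℝ} {X Y X' Y' : ℝ → ℝ × ℝ} {a b : ℝ}

theorem snd_le_snd_of_deriv_snd_le (hab : a ≤ b) (hΨ : ContDiff ℝ 1 Ψ)
    (hX : ∀ t ∈ Icc a b, HasDerivWithinAt X (X' t) (Icc a b) t)
    (hY : ∀ t ∈ Icc a b, HasDerivWithinAt Y (Y' t) (Icc a b) t)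
    (hYode : ∀ t ∈ Icc a b, Y' t = Ψ (Y t)) (hinit : X a = Y a)
    (hposX : ∀ t ∈ Icc a b, 0 < (Ψ (X t)).1) (hposY : ∀ t ∈ Icc a b, 0 < (Ψ (Y t)).1)
    (hX1 : ∀ t ∈ Icc a b, (X' t).1 = (Ψ (X t)).1) (hX2 : ∀ t ∈ Icc a b, (X' t).2 ≤ (Ψ (X t)).2)
    {s t : ℝ} (hs : s ∈ Icc a b) (ht : t ∈ Icc a b) (hst : (X s).1 = (Y t).1) :
    (X s).2 ≤ (Y t).2 := by
  have hX' : ∀ t ∈ Icc a b, 0 < (X' t).1 := fun t ht => (hX1 t ht).symm ▸ hposX t ht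
  have hY' : ∀ t ∈ Icc a b, 0 < (Y' t).1 := fun t ht => (hYode t ht).symm ▸ hposY t ht
  obtain ⟨δ, hδ, K, hK⟩ := exists_lipschitzOnWith_slopeField hΨ hY hY' hYode hab
  set m := min (X b).1 (Y b).1
  have hmX : Icc (X a).1 m ⊆ Icc (X a).1 (X b).1 := Icc_subset_Icc_right (min_le_left _ _)
  have hmY : Icc (X a).1 m ⊆ Icc (Y a).1 (Y b).1 := hinit ▸ Icc_subset_Icc_right (min_le_right _ _)
  have hsub : ∀ x ∈ Ico (X a).1 m, (X' (fstInv X a b x)).2 / (X' (fstInv X a b x)).1 ≤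
      slopeField Ψ (x, curveGraph X a b x) := fun x hx => by
    have hτ := mapsTo_fstInv hX hX' hab (hmX (Ico_subset_Icc_self hx))
    rw [slopeField, ← apply_fstInv hX hX' hab (hmX (Ico_subset_Icc_self hx)), ← hX1 _ hτ]
    exact div_le_div_of_nonneg_right (hX2 _ hτ) (hX' _ hτ).le
  have hsol : ∀ x ∈ Ico (X a).1 m, slopeField Ψ (x, curveGraph Y a b x) =
      (Y' (fstInv Y a b x)).2 / (Y' (fstInv Y a b x)).1 := fun x hx => by
    have hτ := mapsTo_fstInv hY hY' hab (hmY (Ico_subset_Icc_self hx))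
    rw [slopeField, ← apply_fstInv hY hY' hab (hmY (Ico_subset_Icc_self hx)), ← hYode _ hτ]
  have hcmp := le_of_deriv_right_le_of_lipschitzOnWith hδ
    (fun x hx => hK x (hmY (Ico_subset_Icc_self hx)))
    ((continuousOn_curveGraph hX hX' hab).mono hmX)
    (fun x hx => hasDerivWithinAt_curveGraph hX hX' hab
      ⟨hx.1, hx.2.trans_le (min_le_left _ _)⟩) hsub
    ((continuousOn_curveGraph hY hY' hab).mono hmY)
    (fun x hx => hasDerivWithinAt_curveGraph hY hY' hab
      ⟨hinit ▸ hx.1, hx.2.trans_le (min_le_right _ _)⟩) (fun x hx => (hsol x hx).le)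
    (by rw [curveGraph_fst hX hX' ⟨le_rfl, hab⟩, hinit, curveGraph_fst hY hY' ⟨le_rfl, hab⟩])
  rw [← curveGraph_fst hX hX' hs, ← curveGraph_fst hY hY' ht, ← hst]
  refine hcmp _ ⟨(strictMonoOn_fst_of_hasDerivWithinAt hX hX').monotoneOn ⟨le_rfl, hab⟩ hs hs.1,
    le_min ((strictMonoOn_fst_of_hasDerivWithinAt hX hX').monotoneOn hs ⟨hab, le_rfl⟩ hs.2) ?_⟩
  exact hst ▸ (strictMonoOn_fst_of_hasDerivWithinAt hY hY').monotoneOn ht ⟨hab, le_rfl⟩ ht.2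

theorem snd_le_snd_of_le_deriv_snd (hab : a ≤ b) (hΨ : ContDiff ℝ 1 Ψ)
    (hX : ∀ t ∈ Icc a b, HasDerivWithinAt X (X' t) (Icc a b) t)
    (hY : ∀ t ∈ Icc a b, HasDerivWithinAt Y (Y' t) (Icc a b) t)
    (hYode : ∀ t ∈ Icc a b, Y' t = Ψ (Y t)) (hinit : X a = Y a)
    (hposX : ∀ t ∈ Icc a b, 0 < (Ψ (X t)).1) (hposY : ∀ t ∈ Icc a b, 0 < (Ψ (Y t)).1)
    (hX1 : ∀ t ∈ Icc a b, (X' t).1 = (Ψ (X t)).1) (hX2 : ∀ t ∈ Icc a b, (Ψ (X t)).2 ≤ (X' t).2)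
    {s t : ℝ} (hs : s ∈ Icc a b) (ht : t ∈ Icc a b) (hst : (X s).1 = (Y t).1) :
    (Y t).2 ≤ (X s).2 := by
  set ρ : ℝ × ℝ →L[ℝ] ℝ × ℝ := (ContinuousLinearMap.fst ℝ ℝ ℝ).prod (-ContinuousLinearMap.snd ℝ ℝ ℝ)
  have hρ : ∀ p, ρ p = (p.1, -p.2) := fun p => rfl
  have hρρ : ∀ p, ρ (ρ p) = p := fun p => by simp [hρ]
  have := snd_le_snd_of_deriv_snd_le (Ψ := fun p => ρ (Ψ (ρ p))) (X := fun t => ρ (X t))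
    (Y := fun t => ρ (Y t)) (X' := fun t => ρ (X' t)) (Y' := fun t => ρ (Y' t)) hab
    (ρ.contDiff.comp (hΨ.comp ρ.contDiff))
    (fun t ht => ρ.hasFDerivAt.comp_hasDerivWithinAt t (hX t ht))
    (fun t ht => ρ.hasFDerivAt.comp_hasDerivWithinAt t (hY t ht))
    (fun t ht => by simp only [hρρ, hYode t ht]) (by rw [hinit])
    (by simpa [hρρ, hρ] using hposX) (by simpa [hρρ, hρ] using hposY)
    (by simpa [hρρ, hρ] using hX1) (by simpa [hρρ, hρ] using hX2) hs ht (by simpa [hρ] using hst)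
  simpa [hρ] using this

end GraphComparison

theorem graph_comparison
    (T : ℝ) (hT : 0 < T)
    (Ψ : ℝ × ℝ → ℝ × ℝ) (hΨ : ContDiff ℝ 1 Ψ)
    (X Y X' Y' : ℝ → ℝ × ℝ)
    (hX : ∀ t ∈ Icc (0 : ℝ) T, HasDerivWithinAt X (X' t) (Icc (0 : ℝ) T) t)
    (hY : ∀ t ∈ Icc (0 : ℝ) T, HasDerivWithinAt Y (Y' t) (Icc (0 : ℝ) T) t)
    (hYode : ∀ t ∈ Icc (0 : ℝ) T, Y' t = Ψ (Y t))
    (hinit : X 0 = Y 0)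
    (hpos0 : 0 < (Ψ (X 0)).1)
    (hposX : ∀ t ∈ Ioc (0 : ℝ) T, 0 < (Ψ (X t)).1)
    (hposY : ∀ t ∈ Ioc (0 : ℝ) T, 0 < (Ψ (Y t)).1)
    (hX1 : ∀ t ∈ Icc (0 : ℝ) T, (X' t).1 = (Ψ (X t)).1) :
    (StrictMonoOn (fun t => (X t).1) (Icc (0 : ℝ) T) ∧
      StrictMonoOn (fun t => (Y t).1) (Icc (0 : ℝ) T)) ∧
    ((∀ t ∈ Icc (0 : ℝ) T, (X' t).2 ≤ (Ψ (X t)).2) →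
      ∀ s ∈ Icc (0 : ℝ) T, ∀ t ∈ Icc (0 : ℝ) T,
        (X s).1 = (Y t).1 → (X s).2 ≤ (Y t).2) ∧
    ((∀ t ∈ Icc (0 : ℝ) T, (Ψ (X t)).2 ≤ (X' t).2) →
      ∀ s ∈ Icc (0 : ℝ) T, ∀ t ∈ Icc (0 : ℝ) T,
        (X s).1 = (Y t).1 → (Y t).2 ≤ (X s).2) := by
  have hpos : ∀ {Z : ℝ → ℝ × ℝ}, 0 < (Ψ (Z 0)).1 → (∀ t ∈ Ioc (0 : ℝ) T, 0 < (Ψ (Z t)).1) →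
      ∀ t ∈ Icc (0 : ℝ) T, 0 < (Ψ (Z t)).1 := fun h0 h t ht =>
    ht.1.eq_or_lt.elim (fun h0t => h0t ▸ h0) fun h0t => h t ⟨h0t, ht.2⟩
  have hposX' := hpos hpos0 hposX
  have hposY' := hpos (hinit ▸ hpos0) hposY
  refine ⟨⟨strictMonoOn_fst_of_hasDerivWithinAt hX fun t ht => (hX1 t ht).symm ▸ hposX' t ht,
      strictMonoOn_fst_of_hasDerivWithinAt hY fun t ht => (hYode t ht).symm ▸ hposY' t ht⟩,
    fun hX2 s hs t ht =>
      snd_le_snd_of_deriv_snd_le hT.le hΨ hX hY hYode hinit hposX' hposY' hX1 hX2 hs ht,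
    fun hX2 s hs t ht =>
      snd_le_snd_of_le_deriv_snd hT.le hΨ hX hY hYode hinit hposX' hposY' hX1 hX2 hs ht⟩
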